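/- arXiv:2404.01138 — 6 statements merged into one kernel-verified Lean document; each statement's English description precedes it below -/
import Mathlib

section
/- Fix d ≥ 2 and δ ∈ [0,1]. For every unit vector ψ ∈ ℂ^d, with ρ_ψ := (1−δ)|ψ⟩⟨ψ| + (δ/d)·I_d and λ₀ := 1 − (d−1)δ/d, the symmetric-projection purification protocol on two copies achieves fidelity numerator ⟨ψ| tr₂[Π₂ (ρ_ψ⊗ρ_ψ) Π₂] |ψ⟩ = (λ₀ + λ₀²)/2. -/
/-!
The symmetric projector `Π₂ = (1 + SWAP)/2` is idempotent and commutes with `ρ ⊗ ρ`, so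
`Π₂ (ρ ⊗ ρ) Π₂ = Π₂ (ρ ⊗ ρ) = (ρ ⊗ ρ + SWAP (ρ ⊗ ρ))/2`. Tracing out the second factor turns
`ρ ⊗ ρ` into `tr ρ • ρ` and `SWAP (ρ ⊗ ρ)` into `ρ²`. For the depolarized state `tr ρ_ψ = 1` and
`ρ_ψ ψ = λ₀ ψ`, so the fidelity numerator is `(λ₀ + λ₀²)/2`.
-/

open Matrix

/-- Permutation matrix on `(ℂ^d)^{⊗n}` permuting tensor factors. -/
noncomputable def permMat (n d : ℕ) (σ : Equiv.Perm (Fin n)) :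
    Matrix (Fin n → Fin d) (Fin n → Fin d) ℂ :=
  Matrix.of fun v w => if v = w ∘ σ then 1 else 0

/-- Projector onto the symmetric subspace of `(ℂ^d)^{⊗n}`. -/
noncomputable def symProj (n d : ℕ) :
    Matrix (Fin n → Fin d) (Fin n → Fin d) ℂ :=
  ((n.factorial : ℂ)⁻¹) • ∑ σ : Equiv.Perm (Fin n), permMat n d σ

/-- `n`-fold tensor (Kronecker) power of a `d×d` matrix. -/
noncomputable def tpow {d : ℕ} (A : Matrix (Fin d) (Fin d) ℂ) (n : ℕ) :
    Matrix (Fin n → Fin d) (Fin n → Fin d) ℂ :=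
  Matrix.of fun v w => ∏ i, A (v i) (w i)

/-- Partial trace over all tensor factors except the first. -/
noncomputable def ptrRest {n d : ℕ}
    (M : Matrix (Fin (n + 1) → Fin d) (Fin (n + 1) → Fin d) ℂ) :
    Matrix (Fin d) (Fin d) ℂ :=
  Matrix.of fun i j => ∑ t : Fin n → Fin d, M (Fin.cons i t) (Fin.cons j t)

section PermMat

variable {n d : ℕ}

lemma permMat_mul_apply (σ : Equiv.Perm (Fin n)) (M : Matrix (Fin n → Fin d) (Fin n → Fin d) ℂ)
    (v w : Fin n → Fin d) : (permMat n d σ * M) v w = M (v ∘ σ.symm) w := by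
  rw [Matrix.mul_apply, Finset.sum_eq_single (v ∘ σ.symm)]
  · simp [permMat, Function.comp_def]
  · intro u _ hu
    have : v ≠ u ∘ σ := fun h => hu (by simp [h, Function.comp_def])
    simp [permMat, this]
  · simp

lemma mul_permMat_apply (σ : Equiv.Perm (Fin n)) (M : Matrix (Fin n → Fin d) (Fin n → Fin d) ℂ)
    (v w : Fin n → Fin d) : (M * permMat n d σ) v w = M v (w ∘ σ) := by
  rw [Matrix.mul_apply, Finset.sum_eq_single (w ∘ σ)]
  · simp [permMat]
  · intro u _ hu
    simp [permMat, hu]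
  · simp

lemma permMat_one : permMat n d 1 = 1 := by
  ext v w
  simp [permMat, Matrix.one_apply]

lemma permMat_mul (σ τ : Equiv.Perm (Fin n)) :
    permMat n d σ * permMat n d τ = permMat n d (τ * σ) := by
  ext v w
  rw [permMat_mul_apply]
  simp only [permMat, Matrix.of_apply, Equiv.comp_symm_eq]
  rfl

lemma permMat_mul_tpow_comm (σ : Equiv.Perm (Fin n)) (A : Matrix (Fin d) (Fin d) ℂ) :
    permMat n d σ * tpow A n = tpow A n * permMat n d σ := by
  ext v w
  rw [permMat_mul_apply, mul_permMat_apply]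
  simp only [tpow, Matrix.of_apply, Function.comp_apply]
  exact (Equiv.prod_comp σ fun i => A (v (σ.symm i)) (w i)).symm.trans (by simp)

end PermMat

section SymProj

variable {n d : ℕ}

lemma symProj_mul_tpow_comm (A : Matrix (Fin d) (Fin d) ℂ) :
    symProj n d * tpow A n = tpow A n * symProj n d := by
  simp only [symProj, Matrix.smul_mul, Matrix.mul_smul, Finset.sum_mul, Finset.mul_sum,
    permMat_mul_tpow_comm]

lemma symProj_mul_self : symProj n d * symProj n d = symProj n d := by
  have hsum : (∑ σ : Equiv.Perm (Fin n), permMat n d σ) * ∑ τ, permMat n d τ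
      = (n.factorial : ℂ) • ∑ σ : Equiv.Perm (Fin n), permMat n d σ := by
    have hshift (σ : Equiv.Perm (Fin n)) : ∑ τ, permMat n d (τ * σ) = ∑ ρ, permMat n d ρ :=
      Equiv.sum_comp (Equiv.mulRight σ) (permMat n d)
    simp only [Finset.sum_mul_sum, permMat_mul, hshift]
    rw [Finset.sum_const, Finset.card_univ, Fintype.card_perm, Fintype.card_fin, Nat.cast_smul_eq_nsmul]
  have hfact : (n.factorial : ℂ) ≠ 0 := by exact_mod_cast n.factorial_ne_zero
  rw [symProj, Matrix.smul_mul, Matrix.mul_smul, hsum, smul_smul, smul_smul,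
    inv_mul_cancel_right₀ hfact]

lemma symProj_two : symProj 2 d = (2 : ℂ)⁻¹ • (1 + permMat 2 d (Equiv.swap 0 1)) := by
  have h : (Finset.univ : Finset (Equiv.Perm (Fin 2))) = {1, Equiv.swap 0 1} := by decide
  rw [symProj, h, Finset.sum_pair (by decide), permMat_one]
  norm_num

end SymProj

section PartialTrace

variable {n d : ℕ}

lemma ptrRest_add (M N : Matrix (Fin (n + 1) → Fin d) (Fin (n + 1) → Fin d) ℂ) :
    ptrRest (M + N) = ptrRest M + ptrRest N := by
  ext i j
  simp [ptrRest, Finset.sum_add_distrib]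

lemma ptrRest_smul (c : ℂ) (M : Matrix (Fin (n + 1) → Fin d) (Fin (n + 1) → Fin d) ℂ) :
    ptrRest (c • M) = c • ptrRest M := by
  ext i j
  simp [ptrRest, Finset.mul_sum]

lemma ptrRest_tpow (A : Matrix (Fin d) (Fin d) ℂ) :
    ptrRest (tpow A (n + 1)) = A.trace ^ n • A := by
  ext i j
  simp only [ptrRest, tpow, Matrix.of_apply, Fin.prod_univ_succ, Fin.cons_zero, Fin.cons_succ,
    ← Finset.mul_sum, Matrix.smul_apply, smul_eq_mul, Matrix.trace, Matrix.diag,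
    Finset.sum_pow', Fintype.piFinset_univ]
  exact mul_comm _ _

lemma ptrRest_permMat_swap_mul_tpow (A : Matrix (Fin d) (Fin d) ℂ) :
    ptrRest (permMat 2 d (Equiv.swap 0 1) * tpow A 2) = A * A := by
  ext i j
  rw [Matrix.mul_apply, ← (Equiv.funUnique (Fin 1) (Fin d)).sum_comp]
  simp [ptrRest, permMat_mul_apply, tpow, Fin.prod_univ_two, mul_comm]

end PartialTrace

section TwoCopies

variable {d : ℕ}

lemma ptrRest_symProj_two_mul_tpow_mul_symProj_two (A : Matrix (Fin d) (Fin d) ℂ) :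
    ptrRest (n := 1) (symProj 2 d * tpow A 2 * symProj 2 d) = (2 : ℂ)⁻¹ • (A.trace • A + A * A) := by
  have hsandwich : symProj 2 d * tpow A 2 * symProj 2 d = symProj 2 d * tpow A 2 := by
    rw [mul_assoc, ← symProj_mul_tpow_comm, ← mul_assoc, symProj_mul_self]
  rw [hsandwich, symProj_two, Matrix.smul_mul, add_mul, one_mul, ptrRest_smul, ptrRest_add,
    ptrRest_tpow, pow_one, ptrRest_permMat_swap_mul_tpow]

lemma star_dotProduct_ptrRest_symProj_two_mulVec {A : Matrix (Fin d) (Fin d) ℂ} {ψ : Fin d → ℂ}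
    {c : ℂ} (hA : A.trace = 1) (hAψ : A *ᵥ ψ = c • ψ) (hψ : star ψ ⬝ᵥ ψ = 1) :
    star ψ ⬝ᵥ (ptrRest (n := 1) (symProj 2 d * tpow A 2 * symProj 2 d) *ᵥ ψ) = (c + c ^ 2) / 2 := by
  rw [ptrRest_symProj_two_mul_tpow_mul_symProj_two, hA, one_smul, Matrix.smul_mulVec,
    Matrix.add_mulVec, ← Matrix.mulVec_mulVec, hAψ, Matrix.mulVec_smul, hAψ, smul_smul,
    ← add_smul, smul_smul, dotProduct_smul, hψ, smul_eq_mul, mul_one]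
  ring

end TwoCopies

section Depolarizing

variable {d : ℕ} {ψ : Fin d → ℂ}

lemma ne_zero_of_star_dotProduct_self_eq_one (hψ : star ψ ⬝ᵥ ψ = 1) : d ≠ 0 := by
  rintro rfl
  simp at hψ

lemma trace_depolarized (δ : ℝ) (hψ : star ψ ⬝ᵥ ψ = 1) :
    (((1 - δ : ℝ) : ℂ) • Matrix.vecMulVec ψ (star ψ)
      + ((δ / d : ℝ) : ℂ) • (1 : Matrix (Fin d) (Fin d) ℂ)).trace = 1 := by
  have hd : (d : ℂ) ≠ 0 := Nat.cast_ne_zero.mpr (ne_zero_of_star_dotProduct_self_eq_one hψ)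
  rw [Matrix.trace_add, Matrix.trace_smul, Matrix.trace_smul, Matrix.trace_vecMulVec,
    dotProduct_comm, hψ, Matrix.trace_one, Fintype.card_fin, smul_eq_mul, smul_eq_mul]
  push_cast
  rw [div_mul_cancel₀ _ hd]
  ring

lemma depolarized_mulVec (δ : ℝ) (hψ : star ψ ⬝ᵥ ψ = 1) :
    (((1 - δ : ℝ) : ℂ) • Matrix.vecMulVec ψ (star ψ)
      + ((δ / d : ℝ) : ℂ) • (1 : Matrix (Fin d) (Fin d) ℂ)) *ᵥ ψ
      = ((1 - ((d : ℝ) - 1) * δ / d : ℝ) : ℂ) • ψ := by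
  have hd : (d : ℂ) ≠ 0 := Nat.cast_ne_zero.mpr (ne_zero_of_star_dotProduct_self_eq_one hψ)
  rw [Matrix.add_mulVec, Matrix.smul_mulVec, Matrix.smul_mulVec, Matrix.vecMulVec_mulVec, hψ,
    MulOpposite.op_one, one_smul, Matrix.one_mulVec, ← add_smul]
  congr 1
  push_cast
  field_simp
  ring

end Depolarizing

theorem stmt1_general (d : ℕ) (δ : ℝ)
    (ψ : Fin d → ℂ) (hψ : star ψ ⬝ᵥ ψ = 1) :
    star ψ ⬝ᵥ
      (ptrRest (n := 1)
        (symProj 2 d *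
          tpow (((1 - δ : ℝ) : ℂ) • Matrix.vecMulVec ψ (star ψ)
            + ((δ / d : ℝ) : ℂ) • (1 : Matrix (Fin d) (Fin d) ℂ)) 2 *
          symProj 2 d) *ᵥ ψ)
      = ((((1 - ((d : ℝ) - 1) * δ / d) + (1 - ((d : ℝ) - 1) * δ / d) ^ 2) / 2 : ℝ) : ℂ) := by
  rw [star_dotProduct_ptrRest_symProj_two_mulVec (trace_depolarized δ hψ)
    (depolarized_mulVec δ hψ) hψ]
  push_cast
  ring

/-- For `d ≥ 2`, `δ ∈ [0,1]` and any unit vector `ψ ∈ ℂ^d`, with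
`ρ_ψ = (1−δ)|ψ⟩⟨ψ| + (δ/d)I` and `λ₀ = 1 − (d−1)δ/d`, the two-copy
symmetric-projection protocol achieves fidelity numerator
`⟨ψ| tr₂[Π₂ (ρ_ψ⊗ρ_ψ) Π₂] |ψ⟩ = (λ₀ + λ₀²)/2`. -/
theorem stmt1 (d : ℕ) (hd : 2 ≤ d) (δ : ℝ) (hδ : δ ∈ Set.Icc (0 : ℝ) 1)
    (ψ : Fin d → ℂ) (hψ : star ψ ⬝ᵥ ψ = 1) :
    star ψ ⬝ᵥ
      (ptrRest (n := 1)
        (symProj 2 d *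
          tpow (((1 - δ : ℝ) : ℂ) • Matrix.vecMulVec ψ (star ψ)
            + ((δ / d : ℝ) : ℂ) • (1 : Matrix (Fin d) (Fin d) ℂ)) 2 *
          symProj 2 d) *ᵥ ψ)
      = ((((1 - ((d : ℝ) - 1) * δ / d) + (1 - ((d : ℝ) - 1) * δ / d) ^ 2) / 2 : ℝ) : ℂ) :=
  stmt1_general d δ ψ hψ
end

section
/- Let d ≥ 1, n ≥ 1, and let A be any d×d complex matrix. Then tr[Π_n A^{⊗n}] = (1/n)·Σ_{j=1}^{n} tr[A^j] · tr[Π_{n−j} A^{⊗(n−j)}], where the j = n term is interpreted with tr[Π₀ A^{⊗0}] := 1. (Recursion for the success probability p_n of the symmetric-projection protocol, Lemma S1, part 1.) -/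
open Matrix

/-!
Expanding the trace, `tr[P(σ) A^{⊗n}] = ∑_v ∏_i A (v i) (v (σ i))`, so `n! tr[Π_n A^{⊗n}]` is
the sum `G_n` of these weights over `S_n`. Mark the edge of `σ` entering the point `0` by a
matrix `B` in place of `A` and remove `0` from its cycle (`Equiv.Perm.decomposeFin`): if
`σ 0 = 0` the marked weight splits off `tr B`; otherwise summing out the index at `0` fuses the
marked edge with the next one into `B * A`, on a permutation of one point fewer. The sum of
marked weights does not depend on the marked point, so iterating gives
`G_(m+1) = ∑_j m!/(m-j)! tr[A^(j+1)] G_(m-j)`, which is the claim after dividing by `(m+1)!`.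
-/

open Equiv Finset
open scoped Nat

section PermTrace

variable {R ι : Type*} [CommRing R] [Fintype ι] (A B : Matrix ι ι R)

def permTrace {m : ℕ} (σ : Perm (Fin m)) : R :=
  ∑ v : Fin m → ι, ∏ i, A (v i) (v (σ i))

def markedPermTrace {m : ℕ} (q : Fin m) (σ : Perm (Fin m)) : R :=
  ∑ v : Fin m → ι, ∏ i, (if σ i = q then B else A) (v i) (v (σ i))

def sumPermTrace (m : ℕ) : R :=
  ∑ σ : Perm (Fin m), permTrace A σ

def sumMarkedPermTrace (m : ℕ) : R :=
  ∑ σ : Perm (Fin (m + 1)), markedPermTrace A B 0 σ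

omit [CommRing R] in
lemma Fin.sum_univ_fun_eq_sum_cons {M : Type*} [AddCommMonoid M] {m : ℕ}
    (f : (Fin (m + 1) → ι) → M) :
    ∑ v, f v = ∑ x, ∑ w : Fin m → ι, f (Fin.cons x w) := by
  rw [← (Fin.consEquiv fun _ => ι).sum_comp, Fintype.sum_prod_type]
  rfl

lemma markedPermTrace_self {m : ℕ} (q : Fin m) (σ : Perm (Fin m)) :
    markedPermTrace A A q σ = permTrace A σ := by
  simp [markedPermTrace, permTrace]

lemma sumPermTrace_zero : sumPermTrace A 0 = 1 := by
  simp [sumPermTrace, permTrace]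

lemma sumPermTrace_succ_eq_sumMarkedPermTrace (m : ℕ) :
    sumPermTrace A (m + 1) = sumMarkedPermTrace A A m := by
  simp only [sumPermTrace, sumMarkedPermTrace, markedPermTrace_self]

lemma markedPermTrace_conj {m : ℕ} (e : Perm (Fin m)) (q : Fin m) (σ : Perm (Fin m)) :
    markedPermTrace A B (e q) (e * σ * e⁻¹) = markedPermTrace A B q σ := by
  refine Fintype.sum_equiv (e.symm.arrowCongr (Equiv.refl ι)) _ _ fun v => ?_
  refine (Equiv.prod_comp e _).symm.trans (prod_congr rfl fun i _ => ?_)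
  simp [Perm.mul_apply, e.injective.eq_iff]

lemma sum_markedPermTrace_eq {m : ℕ} (q q' : Fin m) :
    ∑ σ : Perm (Fin m), markedPermTrace A B q σ
      = ∑ σ : Perm (Fin m), markedPermTrace A B q' σ := by
  let e := swap q q'
  calc ∑ σ : Perm (Fin m), markedPermTrace A B q σ
      = ∑ σ : Perm (Fin m), markedPermTrace A B q' (e * σ * e⁻¹) := by
        simp only [← markedPermTrace_conj A B e q, e, swap_apply_left]
    _ = ∑ σ : Perm (Fin m), markedPermTrace A B q' σ :=
        ((Equiv.mulLeft e).trans (Equiv.mulRight e⁻¹)).sum_comp (markedPermTrace A B q')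

lemma markedPermTrace_decomposeFin_symm_zero {m : ℕ} (τ : Perm (Fin m)) :
    markedPermTrace A B 0 (Perm.decomposeFin.symm (0, τ)) = B.trace * permTrace A τ := by
  simp only [markedPermTrace, Fin.sum_univ_fun_eq_sum_cons, Fin.prod_univ_succ,
    Perm.decomposeFin_symm_apply_zero, Perm.decomposeFin_symm_apply_succ, swap_self, refl_apply,
    Fin.succ_ne_zero, if_true, if_false, Fin.cons_zero, Fin.cons_succ, ← sum_mul_sum]
  rfl

lemma markedPermTrace_eq_sum_mul_prod_compl {m : ℕ} (k : Fin m) (σ : Perm (Fin m)) :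
    markedPermTrace A B (σ k) σ
      = ∑ w : Fin m → ι, B (w k) (w (σ k)) * ∏ i ∈ {k}ᶜ, A (w i) (w (σ i)) := by
  refine sum_congr rfl fun w _ => ?_
  rw [Fintype.prod_eq_mul_prod_compl k, if_pos rfl]
  congr 1
  refine prod_congr rfl fun i hi => ?_
  rw [if_neg (σ.injective.ne (mem_compl.1 hi ∘ mem_singleton.2))]

lemma markedPermTrace_decomposeFin_symm_succ {m : ℕ} (p : Fin m) (τ : Perm (Fin m)) :
    markedPermTrace A B 0 (Perm.decomposeFin.symm (p.succ, τ))
      = markedPermTrace A (B * A) p τ := by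
  set σ := Perm.decomposeFin.symm (p.succ, τ)
  set k := τ.symm p
  have hσ0 : σ 0 = p.succ := Perm.decomposeFin_symm_apply_zero _ _
  have hσk : σ k.succ = 0 := by
    simp [σ, k, Perm.decomposeFin_symm_apply_succ]
  have hσs : ∀ i ∈ ({k}ᶜ : Finset (Fin m)), σ i.succ = (τ i).succ := by
    intro i hi
    have hik : τ i ≠ p := by simpa [← τ.eq_symm_apply] using hi
    rw [Perm.decomposeFin_symm_apply_succ,
      swap_apply_of_ne_of_ne (Fin.succ_ne_zero _) (Fin.succ_injective _ |>.ne hik)]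
  have hfactor : ∀ x w, ∏ i : Fin m, (if σ i.succ = 0 then B else A) (w i)
        ((Fin.cons x w : Fin (m + 1) → ι) (σ i.succ))
      = B (w k) x * ∏ i ∈ {k}ᶜ, A (w i) (w (τ i)) := by
    intro x w
    rw [Fintype.prod_eq_mul_prod_compl k, hσk, if_pos rfl, Fin.cons_zero]
    congr 1
    refine prod_congr rfl fun i hi => ?_
    rw [hσs i hi, if_neg (Fin.succ_ne_zero _), Fin.cons_succ]
  rw [← τ.apply_symm_apply p, markedPermTrace_eq_sum_mul_prod_compl, markedPermTrace,
    Fin.sum_univ_fun_eq_sum_cons, sum_comm]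
  simp only [Fin.prod_univ_succ, hσ0, Fin.succ_ne_zero, if_false, Fin.cons_zero, Fin.cons_succ,
    hfactor, Matrix.mul_apply, sum_mul]
  refine sum_congr rfl fun w _ => sum_congr rfl fun x _ => ?_
  rw [τ.apply_symm_apply]
  ring

lemma sumMarkedPermTrace_eq (m : ℕ) :
    sumMarkedPermTrace A B m
      = B.trace * sumPermTrace A m
        + ∑ p : Fin m, ∑ τ : Perm (Fin m), markedPermTrace A (B * A) p τ := by
  rw [sumMarkedPermTrace, ← Perm.decomposeFin.symm.sum_comp, Fintype.sum_prod_type,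
    Fin.sum_univ_succ]
  simp only [markedPermTrace_decomposeFin_symm_zero, markedPermTrace_decomposeFin_symm_succ,
    sumPermTrace, mul_sum]

lemma sumMarkedPermTrace_zero : sumMarkedPermTrace A B 0 = B.trace := by
  simp [sumMarkedPermTrace_eq, sumPermTrace_zero]

lemma sumMarkedPermTrace_succ (m : ℕ) :
    sumMarkedPermTrace A B (m + 1)
      = B.trace * sumPermTrace A (m + 1) + (m + 1) * sumMarkedPermTrace A (B * A) m := by
  rw [sumMarkedPermTrace_eq, sumMarkedPermTrace]
  simp_rw [sum_markedPermTrace_eq A (B * A) _ 0]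
  simp

variable [DecidableEq ι]

lemma sumMarkedPermTrace_eq_sum_range (m : ℕ) :
    sumMarkedPermTrace A B m = ∑ j ∈ range (m + 1),
      (m.descFactorial j : R) * (B * A ^ j).trace * sumPermTrace A (m - j) := by
  induction m generalizing B with
  | zero => simp [sumMarkedPermTrace_zero, sumPermTrace_zero]
  | succ m ih =>
    rw [sumMarkedPermTrace_succ, ih, mul_sum, sum_range_succ' _ (m + 1), add_comm]
    congr 1
    · refine sum_congr rfl fun j _ => ?_
      rw [mul_assoc B, ← pow_succ', Nat.succ_descFactorial_succ, Nat.add_sub_add_right]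
      push_cast
      ring
    · simp

lemma sumPermTrace_succ (m : ℕ) :
    sumPermTrace A (m + 1) = ∑ j ∈ range (m + 1),
      (m.descFactorial j : R) * (A ^ (j + 1)).trace * sumPermTrace A (m - j) := by
  simp only [sumPermTrace_succ_eq_sumMarkedPermTrace, sumMarkedPermTrace_eq_sum_range, pow_succ']

end PermTrace

lemma permMat_apply {n d : ℕ} (σ : Perm (Fin n)) (v w : Fin n → Fin d) :
    permMat n d σ v w = if w = v ∘ σ.symm then 1 else 0 := by
  simp only [permMat, Matrix.of_apply, ← σ.comp_symm_eq, eq_comm]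

lemma trace_permMat_mul_tpow {n d : ℕ} (A : Matrix (Fin d) (Fin d) ℂ) (σ : Perm (Fin n)) :
    (permMat n d σ * tpow A n).trace = permTrace A σ := by
  refine sum_congr rfl fun v _ => ?_
  simp only [Matrix.diag_apply, Matrix.mul_apply, permMat_apply, ite_mul, one_mul, zero_mul,
    sum_ite_eq', mem_univ, if_true, tpow, Matrix.of_apply]
  exact (Equiv.prod_comp σ _).symm.trans (by simp)

lemma trace_symProj_mul_tpow {d : ℕ} (A : Matrix (Fin d) (Fin d) ℂ) (n : ℕ) :
    (symProj n d * tpow A n).trace = (n ! : ℂ)⁻¹ * sumPermTrace A n := by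
  simp only [symProj, Matrix.smul_mul, Matrix.trace_smul, sum_mul, Matrix.trace_sum,
    trace_permMat_mul_tpow, smul_eq_mul, sumPermTrace]

lemma inv_factorial_succ_mul_descFactorial {K : Type*} [Field K] [CharZero K] {m j : ℕ}
    (hj : j ≤ m) :
    ((m + 1)! : K)⁻¹ * m.descFactorial j = (m + 1 : K)⁻¹ * ((m - j)! : K)⁻¹ := by
  have hfac : ((m - j)! * m.descFactorial j : K) = m ! := by
    exact_mod_cast Nat.factorial_mul_descFactorial hj
  have hdesc : (m.descFactorial j : K) ≠ 0 := by
    exact_mod_cast (Nat.descFactorial_pos.2 hj).ne'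
  rw [Nat.factorial_succ, Nat.cast_mul, ← hfac]
  field_simp
  push_cast
  ring

theorem stmt3_general (d n : ℕ) (hn : 1 ≤ n) (A : Matrix (Fin d) (Fin d) ℂ) :
    (symProj n d * tpow A n).trace
      = (n : ℂ)⁻¹ * ∑ j ∈ Finset.Icc 1 n, (A ^ j).trace *
          (if n - j = 0 then 1 else (symProj (n - j) d * tpow A (n - j)).trace) := by
  obtain ⟨m, rfl⟩ := Nat.exists_eq_add_of_le' hn
  have htrace : ∀ k, (if k = 0 then 1 else (symProj k d * tpow A k).trace)
      = (k ! : ℂ)⁻¹ * sumPermTrace A k := by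
    rintro (_ | k) <;> simp [trace_symProj_mul_tpow, sumPermTrace_zero]
  rw [trace_symProj_mul_tpow, sumPermTrace_succ, mul_sum, mul_sum, ← Ico_add_one_right_eq_Icc,
    sum_Ico_eq_sum_range]
  refine sum_congr rfl fun j hj => ?_
  have hjm : j ≤ m := by simpa [Nat.lt_succ_iff] using hj
  rw [htrace, add_comm 1 j, Nat.add_sub_add_right]
  push_cast
  linear_combination (A ^ (j + 1)).trace * sumPermTrace A (m - j) *
    inv_factorial_succ_mul_descFactorial (K := ℂ) hjm

/-- Lemma S1, part 1. For `d, n ≥ 1` and any `d×d` matrix `A`,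
`tr[Π_n A^{⊗n}] = (1/n) ∑_{j=1}^{n} tr[A^j] · tr[Π_{n−j} A^{⊗(n−j)}]`,
where the `j = n` term is interpreted with `tr[Π₀ A^{⊗0}] := 1`. -/
theorem stmt3 (d n : ℕ) (hd : 1 ≤ d) (hn : 1 ≤ n) (A : Matrix (Fin d) (Fin d) ℂ) :
    (symProj n d * tpow A n).trace
      = (n : ℂ)⁻¹ * ∑ j ∈ Finset.Icc 1 n, (A ^ j).trace *
          (if n - j = 0 then 1 else (symProj (n - j) d * tpow A (n - j)).trace) :=
  stmt3_general d n hn A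
end

section
/- Let d ≥ 1, n ≥ 1, and let Λ be a diagonal d×d complex matrix whose (0,0) entry is λ₀. Then ⟨e₀| tr_{2…n}[Π_n Λ^{⊗n} Π_n] |e₀⟩ = (1/n)·Σ_{j=1}^{n} λ₀^j · p_{n−j}, where p_k := tr[Π_k Λ^{⊗k}] for k ≥ 1 and p₀ := 1, and e₀ is the first standard basis vector of ℂ^d. (Recursion for the fidelity numerator of the symmetric-projection protocol, Lemma S1, part 2.) -/
open Matrix

/-!
The entries of `Λ^{⊗n}` are `λ^v := ∏ⱼ λ (v j)` on the diagonal, invariant under permuting the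
word `v`, so `Λ^{⊗n}` commutes with `Π_n` and `Π_n Λ^{⊗n} Π_n = Π_n Λ^{⊗n}`, whose entry at `v` is
`|Stab v| · λ^v / n!`. Over the words of a fixed content `c` the stabiliser orders add up to `n!`,
so `p_n` is the complete homogeneous symmetric polynomial `h_n(λ) = ∑_{|c| = n} λ^c`. Averaging the
constraint `v 0 = 0` over all `n` positions turns the partial-trace entry into
`(1/n) ∑_{|c| = n} c₀ λ^c`, and splitting off the `j ≥ 1` copies of the letter `0` gives
`∑_{|c| = n} c₀ λ^c = ∑_{j ≥ 1} λ₀^j h_{n-j}`.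
-/

open Finset Equiv

namespace SymProj

variable {n d : ℕ}

def content (v : Fin n → Fin d) (i : Fin d) : ℕ := #{j | v j = i}

def stabCard (v : Fin n → Fin d) : ℕ := #{σ : Perm (Fin n) | v ∘ σ = v}

lemma content_comp_perm (v : Fin n → Fin d) (σ : Perm (Fin n)) :
    content (v ∘ σ) = content v := by
  funext i
  exact card_equiv σ (by simp)

lemma sum_content (v : Fin n → Fin d) : ∑ i, content v i = n := by
  simpa [content] using
    (card_eq_sum_card_fiberwise (f := v) (s := univ) (t := univ) (by simp)).symm

lemma exists_content_eq {c : Fin d → ℕ} (hc : ∑ i, c i = n) :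
    ∃ v : Fin n → Fin d, content v = c := by
  let e : (Σ i : Fin d, Fin (c i)) ≃ Fin n := Fintype.equivFinOfCardEq (by simp [hc])
  refine ⟨fun j => (e.symm j).1, funext fun i => ?_⟩
  rw [content, card_equiv e.symm (t := {s | s.1 = i}) (by simp), ← Fintype.card_subtype,
    Fintype.card_congr (Equiv.sigmaSubtype i), Fintype.card_fin]

lemma exists_perm_comp_eq {v w : Fin n → Fin d} (h : content v = content w) :
    ∃ σ : Perm (Fin n), v ∘ σ = w := by
  have e (i : Fin d) : {j // w j = i} ≃ {j // v j = i} := Fintype.equivOfCardEq (by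
    simpa only [Fintype.card_subtype, content] using (congrFun h i).symm)
  refine ⟨(sigmaFiberEquiv w).symm.trans ((sigmaCongrRight e).trans (sigmaFiberEquiv v)),
    funext fun j => ?_⟩
  exact ((e (w j)) ⟨j, rfl⟩).2

lemma stabCard_eq_prod (v : Fin n → Fin d) : stabCard v = ∏ i, (content v i).factorial := by
  rw [stabCard, ← Fintype.card_subtype, DomMulAct.stabilizer_card]
  simp only [Fintype.card_subtype, content]

lemma stabCard_comp_perm (v : Fin n → Fin d) (σ : Perm (Fin n)) :
    stabCard (v ∘ σ) = stabCard v := by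
  simp only [stabCard_eq_prod, content_comp_perm]

lemma card_comp_perm_eq {v w : Fin n → Fin d} {σ₀ : Perm (Fin n)} (h : v ∘ σ₀ = w) :
    #{σ : Perm (Fin n) | v ∘ σ = w} = stabCard w := by
  subst h
  rw [stabCard_comp_perm]
  refine card_equiv (Equiv.mulRight σ₀⁻¹) fun σ => ?_
  simp only [mem_filter, mem_univ, true_and, Equiv.coe_mulRight, Perm.coe_mul]
  constructor <;> intro h <;> funext j
  · simpa using congrFun h (σ₀⁻¹ j)
  · simpa using congrFun h (σ₀ j)

lemma sum_stabCard_of_content_eq {c : Fin d → ℕ} (hc : ∑ i, c i = n) :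
    ∑ w : Fin n → Fin d with content w = c, stabCard w = n.factorial := by
  obtain ⟨v, hv⟩ := exists_content_eq hc
  have card_perm : #(univ : Finset (Perm (Fin n))) = n.factorial := by
    rw [card_univ, Fintype.card_perm, Fintype.card_fin]
  -- count the permutations `σ` according to the word `v ∘ σ`
  rw [← card_perm, card_eq_sum_card_fiberwise (f := fun σ : Perm (Fin n) => v ∘ σ) (s := univ)
      (t := {w | content w = c}) fun σ _ => by simp [content_comp_perm, hv]]
  refine sum_congr rfl fun w hw => ?_
  obtain ⟨σ, hσ⟩ := exists_perm_comp_eq (hv.trans (mem_filter.mp hw).2.symm)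
  exact (card_comp_perm_eq hσ).symm

lemma sum_stabCard_smul {M : Type*} [AddCommMonoid M] (g : (Fin d → ℕ) → M) :
    ∑ v : Fin n → Fin d, stabCard v • g (content v)
      = n.factorial • ∑ c ∈ Nat.antidiagonalTuple d n, g c := by
  rw [← sum_fiberwise_of_maps_to (g := content)
      fun v _ => Nat.mem_antidiagonalTuple.mpr (sum_content v), smul_sum]
  refine sum_congr rfl fun c hc => ?_
  rw [sum_congr rfl fun v hv => by rw [(mem_filter.mp hv).2], ← sum_smul,
    sum_stabCard_of_content_eq (Nat.mem_antidiagonalTuple.mp hc)]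

lemma nsmul_sum_filter_apply_eq {M : Type*} [AddCommMonoid M] (F : (Fin n → Fin d) → M)
    (hF : ∀ v (σ : Perm (Fin n)), F (v ∘ σ) = F v) (j₀ : Fin n) (z : Fin d) :
    n • ∑ v with v j₀ = z, F v = ∑ v, content v z • F v := by
  have swap_invariant (j : Fin n) : ∑ v with v j = z, F v = ∑ v with v j₀ = z, F v := by
    refine sum_nbij' (· ∘ swap j j₀) (· ∘ swap j j₀) ?_ ?_ ?_ ?_ ?_ <;>
      simp [Function.comp_assoc, hF, funext_iff]
  simp_rw [content, ← sum_const, sum_filter]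
  rw [sum_comm]
  simp_rw [← sum_filter, swap_invariant, sum_const, card_univ, Fintype.card_fin]

lemma prod_comp_eq_prod_pow_content {M : Type*} [CommMonoid M] (lam : Fin d → M)
    (v : Fin n → Fin d) : ∏ j, lam (v j) = ∏ i, lam i ^ content v i := by
  simp [← prod_fiberwise' univ v lam, content]

def completeHomogeneous {R : Type*} [CommSemiring R] (lam : Fin d → R) (k : ℕ) : R :=
  ∑ c ∈ Nat.antidiagonalTuple d k, ∏ i, lam i ^ c i

lemma sum_pow_mul_completeHomogeneous {R : Type*} [CommSemiring R] (lam : Fin d → R)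
    (z : Fin d) (n : ℕ) :
    ∑ j ∈ Icc 1 n, lam z ^ j * completeHomogeneous lam (n - j)
      = ∑ c ∈ Nat.antidiagonalTuple d n, (c z : R) * ∏ i, lam i ^ c i := by
  have sum_add_single (c : Fin d → ℕ) (j : ℕ) :
      ∑ i, (c i + (Pi.single z j : Fin d → ℕ) i) = ∑ i, c i + j := by
    simp [sum_add_distrib]
  have sub_add_single {c : Fin d → ℕ} {j : ℕ} (h : j ≤ c z) :
      c - Pi.single z j + Pi.single z j = c :=
    tsub_add_cancel_of_le fun i => by rcases eq_or_ne i z with rfl | hi <;> simp [*]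
  have prod_add_single (c : Fin d → ℕ) (j : ℕ) :
      ∏ i, lam i ^ (c i + (Pi.single z j : Fin d → ℕ) i) = lam z ^ j * ∏ i, lam i ^ c i := by
    simp only [pow_add, prod_mul_distrib, mul_comm (∏ i, lam i ^ c i)]
    simp [Pi.single_apply]
  have cast_mul (c : Fin d → ℕ) :
      (c z : R) * ∏ i, lam i ^ c i = ∑ _j ∈ Icc 1 (c z), ∏ i, lam i ^ c i := by
    simp [sum_const, Nat.card_Icc, nsmul_eq_mul]
  simp_rw [completeHomogeneous, mul_sum, cast_mul]
  rw [sum_sigma', sum_sigma']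
  refine sum_nbij' (fun p => ⟨p.2 + Pi.single z p.1, p.1⟩)
    (fun q => ⟨q.2, q.1 - Pi.single z q.2⟩) ?_ ?_ ?_ ?_ ?_
  · rintro ⟨j, c⟩
    simp only [mem_sigma, mem_Icc, Nat.mem_antidiagonalTuple, sum_add_single, Pi.add_apply,
      Pi.single_eq_same]
    omega
  · rintro ⟨c, j⟩
    simp only [mem_sigma, mem_Icc, Nat.mem_antidiagonalTuple]
    rintro ⟨hc, hj, hjc⟩
    have := sum_add_single (c - Pi.single z j) j
    simp only [← Pi.add_apply, sub_add_single hjc] at this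
    have : c z ≤ n := hc ▸ single_le_sum (by simp) (mem_univ z)
    omega
  · rintro ⟨j, c⟩ -
    simp
  · rintro ⟨c, j⟩ h
    simp only [mem_sigma, mem_Icc] at h
    simp [sub_add_single h.2.2]
  · rintro ⟨j, c⟩ -
    simp only [Pi.add_apply, prod_add_single]

lemma tpow_diagonal (lam : Fin d → ℂ) :
    tpow (diagonal lam) n = diagonal fun v => ∏ j, lam (v j) := by
  ext v w
  by_cases h : v = w
  · subst h; simp [tpow]
  · obtain ⟨j, hj⟩ := Function.ne_iff.mp h
    simp only [tpow, of_apply, diagonal_apply_ne _ h]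
    exact prod_eq_zero (f := fun i => diagonal lam (v i) (w i)) (mem_univ j)
      (diagonal_apply_ne lam hj)

lemma permMat_mul_permMat (σ τ : Perm (Fin n)) :
    permMat n d σ * permMat n d τ = permMat n d (τ * σ) := by
  ext v w
  simp only [permMat, mul_apply, of_apply, mul_ite, mul_one, mul_zero, sum_ite_eq', mem_univ,
    if_true, Function.comp_assoc, Perm.coe_mul]
  congr

lemma sum_permMat_mul_self :
    (∑ σ, permMat n d σ) * (∑ σ, permMat n d σ) = n.factorial • ∑ σ, permMat n d σ := by
  simp_rw [sum_mul, mul_sum, permMat_mul_permMat]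
  rw [sum_congr rfl fun σ _ =>
      Fintype.sum_equiv (Equiv.mulRight σ) (fun τ => permMat n d (τ * σ)) _ fun _ => rfl,
    sum_const, card_univ, Fintype.card_perm, Fintype.card_fin]

lemma symProj_mul_self : symProj n d * symProj n d = symProj n d := by
  have : (n.factorial : ℂ) ≠ 0 := by exact_mod_cast n.factorial_ne_zero
  rw [symProj, smul_mul_smul_comm, sum_permMat_mul_self, ← Nat.cast_smul_eq_nsmul ℂ, smul_smul,
    inv_mul_cancel_right₀ this]

lemma permMat_commute_diagonal {f : (Fin n → Fin d) → ℂ} (σ : Perm (Fin n))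
    (hf : ∀ v, f (v ∘ σ) = f v) : Commute (permMat n d σ) (diagonal f) := by
  ext v w
  by_cases h : v = w ∘ σ
  · simp [permMat, h, hf]
  · simp [permMat, h]

lemma symProj_commute_diagonal {f : (Fin n → Fin d) → ℂ}
    (hf : ∀ v (σ : Perm (Fin n)), f (v ∘ σ) = f v) : Commute (symProj n d) (diagonal f) :=
  (Commute.sum_left _ _ _ fun σ _ => permMat_commute_diagonal σ (hf · σ)).smul_left _

lemma symProj_mul_diagonal_mul_symProj {f : (Fin n → Fin d) → ℂ}
    (hf : ∀ v (σ : Perm (Fin n)), f (v ∘ σ) = f v) :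
    symProj n d * diagonal f * symProj n d = symProj n d * diagonal f := by
  rw [mul_assoc, ← (symProj_commute_diagonal hf).eq, ← mul_assoc, symProj_mul_self]

lemma symProj_apply_self (v : Fin n → Fin d) :
    symProj n d v v = (n.factorial : ℂ)⁻¹ * stabCard v := by
  simp only [symProj, permMat, stabCard, Matrix.smul_apply, Matrix.sum_apply, of_apply,
    smul_eq_mul, natCast_card_filter, eq_comm (a := v)]

lemma trace_symProj_mul_tpow_diagonal (lam : Fin d → ℂ) :
    (symProj n d * tpow (diagonal lam) n).trace = completeHomogeneous lam n := by
  have hfac : (n.factorial : ℂ) ≠ 0 := by exact_mod_cast n.factorial_ne_zero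
  have := sum_stabCard_smul (M := ℂ) (n := n) fun c => ∏ i, lam i ^ c i
  simp only [nsmul_eq_mul] at this
  simp_rw [trace, diag_apply, tpow_diagonal, mul_diagonal, symProj_apply_self,
    prod_comp_eq_prod_pow_content, mul_assoc, ← mul_sum]
  rw [this, completeHomogeneous, inv_mul_cancel_left₀ hfac]

lemma ptrRest_apply_self (M : Matrix (Fin (n + 1) → Fin d) (Fin (n + 1) → Fin d) ℂ)
    (i : Fin d) :
    ptrRest M i i = ∑ v with v 0 = i, M v v := by
  refine sum_nbij' (fun t => Fin.cons i t) Fin.tail ?_ ?_ ?_ ?_ ?_ <;> simp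
  intro v hv
  rw [← hv, Fin.cons_self_tail]

lemma ptrRest_symProj_mul_tpow_diagonal_mul_symProj_apply_self (lam : Fin d → ℂ) (m : ℕ)
    (z : Fin d) :
    ptrRest (symProj (m + 1) d * tpow (diagonal lam) (m + 1) * symProj (m + 1) d) z z
      = ((m + 1 : ℕ) : ℂ)⁻¹ *
          ∑ c ∈ Nat.antidiagonalTuple d (m + 1), (c z : ℂ) * ∏ i, lam i ^ c i := by
  have weight_comp (v : Fin (m + 1) → Fin d) (σ : Perm (Fin (m + 1))) :
      ∏ j, lam ((v ∘ σ) j) = ∏ j, lam (v j) :=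
    Equiv.prod_comp σ fun j => lam (v j)
  have symmetrize := nsmul_sum_filter_apply_eq (fun v => (stabCard v : ℂ) * ∏ j, lam (v j))
    (fun v σ => by rw [stabCard_comp_perm, weight_comp]) 0 z
  have count := sum_stabCard_smul (M := ℂ) (n := m + 1) fun c => (c z : ℂ) * ∏ i, lam i ^ c i
  simp only [nsmul_eq_mul, prod_comp_eq_prod_pow_content] at symmetrize count
  have hfac : ((m + 1).factorial : ℂ) ≠ 0 := by exact_mod_cast (m + 1).factorial_ne_zero
  rw [tpow_diagonal, symProj_mul_diagonal_mul_symProj weight_comp, ptrRest_apply_self]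
  simp_rw [mul_diagonal, symProj_apply_self, mul_assoc, ← mul_sum, prod_comp_eq_prod_pow_content]
  simp_rw [mul_left_comm (content _ z : ℂ)] at symmetrize
  field_simp
  linear_combination symmetrize.trans count

end SymProj

open SymProj

/-- Lemma S1, part 2. For `d ≥ 1`, `n = m+1 ≥ 1` and a diagonal
matrix `Λ = diagonal lam` with `(0,0)` entry `λ₀ = lam 0`,
`⟨e₀| tr_{2…n}[Π_n Λ^{⊗n} Π_n] |e₀⟩ = (1/n) ∑_{j=1}^{n} λ₀^j · p_{n−j}`,
where `p_k = tr[Π_k Λ^{⊗k}]` for `k ≥ 1` and `p₀ = 1`. -/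
theorem stmt4 (d m : ℕ) (hd : 1 ≤ d) (lam : Fin d → ℂ) :
    ptrRest (symProj (m + 1) d * tpow (Matrix.diagonal lam) (m + 1) * symProj (m + 1) d)
        (⟨0, hd⟩ : Fin d) (⟨0, hd⟩ : Fin d)
      = ((m + 1 : ℕ) : ℂ)⁻¹ * ∑ j ∈ Finset.Icc 1 (m + 1),
          (lam (⟨0, hd⟩ : Fin d)) ^ j *
            (if m + 1 - j = 0 then 1
             else (symProj (m + 1 - j) d * tpow (Matrix.diagonal lam) (m + 1 - j)).trace) := by
  have trace_eq_completeHomogeneous (k : ℕ) :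
      (if k = 0 then 1 else (symProj k d * tpow (diagonal lam) k).trace)
        = completeHomogeneous lam k := by
    split_ifs with hk
    · simp [hk, completeHomogeneous, Nat.antidiagonalTuple_zero_right]
    · exact trace_symProj_mul_tpow_diagonal lam
  simp_rw [trace_eq_completeHomogeneous, sum_pow_mul_completeHomogeneous,
    ptrRest_symProj_mul_tpow_diagonal_mul_symProj_apply_self]
end

section
/- Fix d ≥ 2 and δ ∈ (0,1). With F(p) := sSup { tr[J·Q₂^{T₃}]/p : J a positive semidefinite d³×d³ matrix with tr₃[J] ≤ I_{d²} and tr[J·R₂] = p }, the function F is non-increasing on (0,1): for all 0 < p ≤ q < 1, F(q) ≤ F(p). (Monotonicity of the maximal universal fidelity in the success probability, from the proof of Proposition 2.) -/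
open Matrix ComplexOrder

/-- `M ⊗ I_d`: a matrix on the first two tensor factors, tensored with the
identity on the third factor. -/
noncomputable def tid {d : ℕ} (M : Matrix (Fin 2 → Fin d) (Fin 2 → Fin d) ℂ) :
    Matrix (Fin 3 → Fin d) (Fin 3 → Fin d) ℂ :=
  Matrix.of fun v w =>
    M (fun i => v i.castSucc) (fun i => w i.castSucc) * (if v 2 = w 2 then 1 else 0)

/-- Partial transpose with respect to the third tensor factor. -/
noncomputable def pt3 {d : ℕ} (M : Matrix (Fin 3 → Fin d) (Fin 3 → Fin d) ℂ) :
    Matrix (Fin 3 → Fin d) (Fin 3 → Fin d) ℂ :=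
  Matrix.of fun v w => M (Function.update v 2 (w 2)) (Function.update w 2 (v 2))

/-- Partial trace over the third tensor factor. -/
noncomputable def ptr3 {d : ℕ} (M : Matrix (Fin 3 → Fin d) (Fin 3 → Fin d) ℂ) :
    Matrix (Fin 2 → Fin d) (Fin 2 → Fin d) ℂ :=
  Matrix.of fun v w => ∑ k : Fin d, M (Fin.snoc v k) (Fin.snoc w k)

/-- `D(n,d) = binom(n+d−1, n)`, the dimension of the symmetric subspace. -/
noncomputable def Dnd (n d : ℕ) : ℝ := (Nat.choose (n + d - 1) n : ℝ)

/-- `λ₀ = 1 − (d−1)δ/d`, the top eigenvalue of the depolarized state. -/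
noncomputable def lam0 (d : ℕ) (δ : ℝ) : ℝ := 1 - ((d : ℝ) - 1) * δ / d

/-- `p₂ = (1 + tr[Λ²])/2` for `Λ = Diag(λ₀, δ/d, …, δ/d)`. -/
noncomputable def pTwo (d : ℕ) (δ : ℝ) : ℝ :=
  (1 + (lam0 d δ ^ 2 + ((d : ℝ) - 1) * (δ / d) ^ 2)) / 2

/-- `f₂ = (λ₀ + λ₀²)/(2 p₂)`. -/
noncomputable def fTwo (d : ℕ) (δ : ℝ) : ℝ :=
  (lam0 d δ + lam0 d δ ^ 2) / (2 * pTwo d δ)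

/-- Closed form of the Haar average `R₂ = ∫ ρ_ψ^{⊗2} ⊗ I dψ`
`= ((1−δ)²·Π₂/D(2,d) + ((2δ−δ²)/d²)·I_{d²}) ⊗ I_d`. -/
noncomputable def R2 (d : ℕ) (δ : ℝ) :
    Matrix (Fin 3 → Fin d) (Fin 3 → Fin d) ℂ :=
  tid ((((1 - δ) ^ 2 / Dnd 2 d : ℝ) : ℂ) • symProj 2 d
    + (((2 * δ - δ ^ 2) / (d : ℝ) ^ 2 : ℝ) : ℂ) • (1 : Matrix (Fin 2 → Fin d) (Fin 2 → Fin d) ℂ))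

/-- Closed form of the partial transpose `Q₂^{T₃}` of the Haar average
`Q₂ = ∫ ρ_ψ^{⊗2} ⊗ |ψ⟩⟨ψ| dψ`:
`Q₂^{T₃} = (1−δ)³·Π₃^{T₃}/D(3,d) + (2(1−δ)²δ/d)·(Π₂/D(2,d))⊗I_d + ((3δ−2δ²)/d²)·I_{d³}`. -/
noncomputable def Q2T3 (d : ℕ) (δ : ℝ) :
    Matrix (Fin 3 → Fin d) (Fin 3 → Fin d) ℂ :=
  (((1 - δ) ^ 3 / Dnd 3 d : ℝ) : ℂ) • pt3 (symProj 3 d)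
    + ((2 * (1 - δ) ^ 2 * δ / (d : ℝ) : ℝ) : ℂ) • tid ((((Dnd 2 d)⁻¹ : ℝ) : ℂ) • symProj 2 d)
    + (((3 * δ - 2 * δ ^ 2) / (d : ℝ) ^ 2 : ℝ) : ℂ) • (1 : Matrix (Fin 3 → Fin d) (Fin 3 → Fin d) ℂ)

/-- The SDP value `F(p)`: the supremum of `tr[J·Q₂^{T₃}]/p` over positive
semidefinite `J` with `tr₃[J] ≤ I_{d²}` (Loewner order) and `tr[J·R₂] = p`;
it equals the maximal universal fidelity `F_Depo(2,p)`. -/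
noncomputable def Fsdp (d : ℕ) (δ : ℝ) (p : ℝ) : ℝ :=
  sSup {x : ℝ | ∃ J : Matrix (Fin 3 → Fin d) (Fin 3 → Fin d) ℂ,
      J.PosSemidef ∧
      ((1 : Matrix (Fin 2 → Fin d) (Fin 2 → Fin d) ℂ) - ptr3 J).PosSemidef ∧
      (J * R2 d δ).trace = (p : ℂ) ∧
      x = ((J * Q2T3 d δ).trace).re / p}

/-!
Feasible points scale down: if `J` is feasible at `q` and `0 < p ≤ q`, then `(p/q) • J` is
feasible at `p` (the constraints `J ≥ 0` and `tr₃ J ≤ I` are preserved by scalars in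
`[0, 1]`, and `tr[J R₂]` is linear), with the same objective value `tr[J Q₂^{T₃}]/p`. So the
value set at `q` lies inside the value set at `p`. Comparing suprema also needs the value set at
`p` to be bounded above, which holds because the constraints force every entry of `J` to have
modulus at most `1`, and the value set at `q` to be nonempty, witnessed by `(q/d) • I`.
-/

theorem Matrix.PosSemidef.norm_apply_sq_le {n 𝕜 : Type*} [RCLike 𝕜] {A : Matrix n n 𝕜}
    (hA : A.PosSemidef) (i j : n) : ‖A i j‖ ^ 2 ≤ ‖A i i‖ * ‖A j j‖ := by
  have hdet := (hA.submatrix ![i, j]).det_nonneg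
  rw [det_fin_two] at hdet
  simp only [submatrix_apply, Matrix.cons_val_zero, Matrix.cons_val_one] at hdet
  rw [← hA.isHermitian.apply j i, RCLike.star_def, RCLike.mul_conj, sub_nonneg,
    ← RCLike.norm_of_nonneg' (hA.diag_nonneg (i := i)),
    ← RCLike.norm_of_nonneg' (hA.diag_nonneg (i := j))] at hdet
  exact_mod_cast hdet

theorem Matrix.norm_trace_mul_le_of_norm_apply_le_one {n R : Type*} [Fintype n]
    [SeminormedRing R] {A B : Matrix n n R} (hA : ∀ i j, ‖A i j‖ ≤ 1) :
    ‖(A * B).trace‖ ≤ ∑ i, ∑ j, ‖B i j‖ :=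
  calc ‖(A * B).trace‖ = ‖∑ i, ∑ j, A i j * B j i‖ := rfl
    _ ≤ ∑ i, ∑ j, ‖A i j * B j i‖ :=
        (norm_sum_le _ _).trans (Finset.sum_le_sum fun i _ => norm_sum_le _ _)
    _ ≤ ∑ i, ∑ j, ‖B j i‖ := by
        gcongr with i _ j _
        exact (norm_mul_le _ _).trans (mul_le_of_le_one_left (norm_nonneg _) (hA i j))
    _ = ∑ i, ∑ j, ‖B i j‖ := Finset.sum_comm

section PartialTrace

variable {d : ℕ}

theorem ptr3_smul (c : ℂ) (M : Matrix (Fin 3 → Fin d) (Fin 3 → Fin d) ℂ) :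
    ptr3 (c • M) = c • ptr3 M := by
  ext v w
  simp [ptr3, Finset.mul_sum]

theorem ptr3_one : ptr3 (1 : Matrix (Fin 3 → Fin d) (Fin 3 → Fin d) ℂ) = (d : ℂ) • 1 := by
  ext v w
  by_cases hvw : v = w
  · simp [ptr3, hvw]
  · simp [ptr3, one_apply, Fin.snoc_injective2.eq_iff, hvw]

theorem apply_self_le_one_of_posSemidef_one_sub_ptr3
    {J : Matrix (Fin 3 → Fin d) (Fin 3 → Fin d) ℂ} (hJ : J.PosSemidef)
    (hJ₃ : ((1 : Matrix (Fin 2 → Fin d) (Fin 2 → Fin d) ℂ) - ptr3 J).PosSemidef)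
    (u : Fin 3 → Fin d) : J u u ≤ 1 := by
  have hsum : ∑ k, J (Fin.snoc (Fin.init u) k) (Fin.snoc (Fin.init u) k) ≤ 1 := by
    simpa [ptr3, sub_nonneg] using hJ₃.diag_nonneg (i := Fin.init u)
  calc J u u
        = J (Fin.snoc (Fin.init u) (u (Fin.last 2))) (Fin.snoc (Fin.init u) (u (Fin.last 2))) := by
        rw [Fin.snoc_init_self]
    _ ≤ ∑ k, J (Fin.snoc (Fin.init u) k) (Fin.snoc (Fin.init u) k) :=
        Finset.single_le_sum (fun k _ => hJ.diag_nonneg) (Finset.mem_univ _)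
    _ ≤ 1 := hsum

theorem norm_apply_le_one_of_posSemidef_one_sub_ptr3
    {J : Matrix (Fin 3 → Fin d) (Fin 3 → Fin d) ℂ} (hJ : J.PosSemidef)
    (hJ₃ : ((1 : Matrix (Fin 2 → Fin d) (Fin 2 → Fin d) ℂ) - ptr3 J).PosSemidef)
    (v w : Fin 3 → Fin d) : ‖J v w‖ ≤ 1 := by
  have hdiag : ∀ u, ‖J u u‖ ≤ 1 := fun u => by
    have h := apply_self_le_one_of_posSemidef_one_sub_ptr3 hJ hJ₃ u
    rw [← Complex.norm_of_nonneg' hJ.diag_nonneg] at h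
    exact_mod_cast h
  have := hJ.norm_apply_sq_le v w
  nlinarith [hdiag v, hdiag w, norm_nonneg (J v v), norm_nonneg (J w w), norm_nonneg (J v w)]

end PartialTrace

theorem trace_tid {d : ℕ} (M : Matrix (Fin 2 → Fin d) (Fin 2 → Fin d) ℂ) :
    (tid M).trace = d * M.trace := by
  rw [Matrix.trace, ← (Fin.snocEquiv fun _ => Fin d).sum_comp, Fintype.sum_prod_type]
  simp [tid, Fin.snocEquiv, Matrix.trace, Finset.mul_sum]

theorem trace_symProj_two (d : ℕ) : (symProj 2 d).trace = Dnd 2 d := by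
  have hswap : (Finset.univ : Finset (Equiv.Perm (Fin 2))) = {1, Equiv.swap 0 1} := by decide
  have hsymm : ∀ a b : Fin d, (a = b ∧ b = a) ↔ a = b :=
    fun _ _ => and_iff_left_of_imp Eq.symm
  rw [symProj, Matrix.trace_smul, hswap, Finset.sum_pair (by decide), Matrix.trace_add]
  simp only [Matrix.trace, permMat, Matrix.diag, Matrix.of_apply]
  rw [← (finTwoArrowEquiv (Fin d)).symm.sum_comp, ← (finTwoArrowEquiv (Fin d)).symm.sum_comp,
    Fintype.sum_prod_type, Fintype.sum_prod_type]
  simp [funext_iff, Fin.forall_fin_two, hsymm, Dnd, Nat.cast_choose_two]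
  ring

theorem Dnd_two_pos {d : ℕ} (hd : d ≠ 0) : 0 < Dnd 2 d := by
  unfold Dnd
  exact_mod_cast Nat.choose_pos (by omega)

theorem trace_R2 {d : ℕ} (hd : d ≠ 0) (δ : ℝ) : (R2 d δ).trace = d := by
  have hD : (Dnd 2 d : ℂ) ≠ 0 := by exact_mod_cast (Dnd_two_pos hd).ne'
  have hd' : (d : ℂ) ≠ 0 := by exact_mod_cast hd
  rw [R2, trace_tid, Matrix.trace_add, Matrix.trace_smul, Matrix.trace_smul, trace_symProj_two,
    Matrix.trace_one]
  simp only [Fintype.card_fun, Fintype.card_fin, smul_eq_mul]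
  push_cast
  field_simp
  ring

section SDP

variable {d : ℕ} {δ : ℝ}

def fsdpFeasible (d : ℕ) (δ p : ℝ) : Set (Matrix (Fin 3 → Fin d) (Fin 3 → Fin d) ℂ) :=
  {J | J.PosSemidef ∧
    ((1 : Matrix (Fin 2 → Fin d) (Fin 2 → Fin d) ℂ) - ptr3 J).PosSemidef ∧
    (J * R2 d δ).trace = p}

theorem Fsdp_eq_sSup_image (d : ℕ) (δ p : ℝ) :
    Fsdp d δ p = sSup ((fun J => (J * Q2T3 d δ).trace.re / p) '' fsdpFeasible d δ p) := by
  unfold Fsdp fsdpFeasible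
  congr 1
  ext x
  simp only [Set.mem_ofPred_eq, Set.mem_image, and_assoc, eq_comm (a := x)]

theorem bddAbove_image_fsdpFeasible (d : ℕ) (δ p : ℝ) :
    BddAbove ((fun J => (J * Q2T3 d δ).trace.re / p) '' fsdpFeasible d δ p) := by
  refine ⟨(∑ v, ∑ w, ‖Q2T3 d δ v w‖) / |p|, ?_⟩
  rintro _ ⟨J, ⟨hJ, hJ₃, -⟩, rfl⟩
  calc (J * Q2T3 d δ).trace.re / p ≤ |(J * Q2T3 d δ).trace.re| / |p| := by
        rw [← abs_div]; exact le_abs_self _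
    _ ≤ ‖(J * Q2T3 d δ).trace‖ / |p| := by gcongr; exact Complex.abs_re_le_norm _
    _ ≤ (∑ v, ∑ w, ‖Q2T3 d δ v w‖) / |p| := by
        gcongr
        exact norm_trace_mul_le_of_norm_apply_le_one
          (norm_apply_le_one_of_posSemidef_one_sub_ptr3 hJ hJ₃)

theorem smul_one_mem_fsdpFeasible (hd : d ≠ 0) {q : ℝ} (hq₀ : 0 ≤ q) (hq₁ : q ≤ 1) :
    ((q / d : ℝ) : ℂ) • 1 ∈ fsdpFeasible d δ q := by
  have hd' : (d : ℂ) ≠ 0 := by exact_mod_cast hd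
  refine ⟨.smul .one (by positivity), ?_, ?_⟩
  · have h : (1 : Matrix (Fin 2 → Fin d) (Fin 2 → Fin d) ℂ) - ptr3 (((q / d : ℝ) : ℂ) • 1)
        = ((1 - q : ℝ) : ℂ) • 1 := by
      rw [ptr3_smul, ptr3_one, smul_smul]
      push_cast
      rw [div_mul_cancel₀ _ hd', sub_smul, one_smul]
    rw [h]
    exact .smul .one (Complex.zero_le_real.2 (sub_nonneg.2 hq₁))
  · rw [Matrix.smul_mul, one_mul, Matrix.trace_smul, trace_R2 hd, smul_eq_mul]
    push_cast
    exact div_mul_cancel₀ _ hd'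

theorem smul_mem_fsdpFeasible {q t : ℝ} {J : Matrix (Fin 3 → Fin d) (Fin 3 → Fin d) ℂ}
    (hJ : J ∈ fsdpFeasible d δ q) (ht₀ : 0 ≤ t) (ht₁ : t ≤ 1) :
    (t : ℂ) • J ∈ fsdpFeasible d δ (t * q) := by
  obtain ⟨hJ, hJ₃, hJR⟩ := hJ
  refine ⟨hJ.smul (Complex.zero_le_real.2 ht₀), ?_, ?_⟩
  · have h : (1 : Matrix (Fin 2 → Fin d) (Fin 2 → Fin d) ℂ) - ptr3 ((t : ℂ) • J)
        = ((1 - t : ℝ) : ℂ) • 1 + (t : ℂ) • (1 - ptr3 J) := by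
      rw [ptr3_smul]
      push_cast
      module
    rw [h]
    exact (PosSemidef.one.smul (Complex.zero_le_real.2 (sub_nonneg.2 ht₁))).add
      (hJ₃.smul (Complex.zero_le_real.2 ht₀))
  · rw [Matrix.smul_mul, Matrix.trace_smul, hJR, smul_eq_mul]
    push_cast
    rfl

end SDP

theorem stmt10_general (d : ℕ) (hd : 2 ≤ d) (δ : ℝ)
    (p q : ℝ) (hp : 0 < p) (hpq : p ≤ q) (hq : q < 1) :
    Fsdp d δ q ≤ Fsdp d δ p := by
  have hq₀ : 0 < q := hp.trans_le hpq
  rw [Fsdp_eq_sSup_image, Fsdp_eq_sSup_image]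
  refine csSup_le_csSup (bddAbove_image_fsdpFeasible d δ p)
    ⟨_, _, smul_one_mem_fsdpFeasible (by omega) hq₀.le hq.le, rfl⟩ ?_
  rintro _ ⟨J, hJ, rfl⟩
  have hpJ := smul_mem_fsdpFeasible hJ (div_nonneg hp.le hq₀.le) ((div_le_one hq₀).2 hpq)
  rw [div_mul_cancel₀ p hq₀.ne'] at hpJ
  refine ⟨_, hpJ, ?_⟩
  simp only [Matrix.smul_mul, Matrix.trace_smul, smul_eq_mul, Complex.re_ofReal_mul]
  field_simp

/-- monotonicity, from the proof of Proposition 2. For `d ≥ 2`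
and `δ ∈ (0,1)`, the maximal universal fidelity `F` is non-increasing on `(0,1)`:
for all `0 < p ≤ q < 1`, `F(q) ≤ F(p)`. -/
theorem stmt10 (d : ℕ) (hd : 2 ≤ d) (δ : ℝ) (hδ : δ ∈ Set.Ioo (0 : ℝ) 1)
    (p q : ℝ) (hp : 0 < p) (hpq : p ≤ q) (hq : q < 1) :
    Fsdp d δ q ≤ Fsdp d δ p :=
  stmt10_general d hd δ p q hp hpq hq
end

section
/- Let δ ∈ [0,1], let ψ ∈ ℂ² be a unit vector, and set ρ := (1−δ)|ψ⟩⟨ψ| + (δ/2)·I₂. With p(δ) := 1 − δ + δ²/2 and δ′ := (2δ + δ³)/(6·p(δ)), one has (1/3)·ρ + (2/3)·ρ³ = p(δ)·((1−δ′)|ψ⟩⟨ψ| + (δ′/2)·I₂). In particular, tr[(1/3)ρ + (2/3)ρ³] = p(δ). (Performance of the three-qubit purification circuit under depolarizing noise.) -/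
open Matrix

/-- performance of the three-qubit purification circuit under
depolarizing noise. For `δ ∈ [0,1]` and a unit vector `ψ ∈ ℂ²`, with
`ρ = (1−δ)|ψ⟩⟨ψ| + (δ/2)I₂`, `p(δ) = 1 − δ + δ²/2` and
`δ′ = (2δ + δ³)/(6·p(δ))`, one has
`(1/3)ρ + (2/3)ρ³ = p(δ)·((1−δ′)|ψ⟩⟨ψ| + (δ′/2)I₂)`; in particular
`tr[(1/3)ρ + (2/3)ρ³] = p(δ)`. -/
theorem stmt16 (δ : ℝ) (hδ : δ ∈ Set.Icc (0 : ℝ) 1)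
    (ψ : Fin 2 → ℂ) (hψ : star ψ ⬝ᵥ ψ = 1) :
    (((1 : ℂ) / 3) • (((1 - δ : ℝ) : ℂ) • Matrix.vecMulVec ψ (star ψ)
          + ((δ / 2 : ℝ) : ℂ) • (1 : Matrix (Fin 2) (Fin 2) ℂ))
        + ((2 : ℂ) / 3) • (((1 - δ : ℝ) : ℂ) • Matrix.vecMulVec ψ (star ψ)
          + ((δ / 2 : ℝ) : ℂ) • (1 : Matrix (Fin 2) (Fin 2) ℂ)) ^ 3
      = ((1 - δ + δ ^ 2 / 2 : ℝ) : ℂ) •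
          (((1 - (2 * δ + δ ^ 3) / (6 * (1 - δ + δ ^ 2 / 2)) : ℝ) : ℂ) •
              Matrix.vecMulVec ψ (star ψ)
            + (((2 * δ + δ ^ 3) / (6 * (1 - δ + δ ^ 2 / 2)) / 2 : ℝ) : ℂ) •
              (1 : Matrix (Fin 2) (Fin 2) ℂ)))
    ∧ (((1 : ℂ) / 3) • (((1 - δ : ℝ) : ℂ) • Matrix.vecMulVec ψ (star ψ)
          + ((δ / 2 : ℝ) : ℂ) • (1 : Matrix (Fin 2) (Fin 2) ℂ))
        + ((2 : ℂ) / 3) • (((1 - δ : ℝ) : ℂ) • Matrix.vecMulVec ψ (star ψ)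
          + ((δ / 2 : ℝ) : ℂ) • (1 : Matrix (Fin 2) (Fin 2) ℂ)) ^ 3).trace
      = ((1 - δ + δ ^ 2 / 2 : ℝ) : ℂ) := by
  set P : Matrix (Fin 2) (Fin 2) ℂ := Matrix.vecMulVec ψ (star ψ) with hPdef
  have hP : P * P = P := by
    ext i j
    simp only [hPdef, mul_apply, vecMulVec_apply]
    have h1 : ∑ k, (ψ i * star ψ k) * (ψ k * star ψ j)
        = (ψ i * star ψ j) * ∑ k, star ψ k * ψ k := by
      rw [Finset.mul_sum]; congr 1; ext k; ring
    rw [h1]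
    have h : ∑ k, star ψ k * ψ k = 1 := by simpa [dotProduct] using hψ
    rw [h, mul_one]
  have htrP : P.trace = 1 := by
    simp only [hPdef, trace, diag, vecMulVec_apply]
    simpa [dotProduct, mul_comm] using hψ
  have hp : (1 - δ + δ ^ 2 / 2 : ℝ) ≠ 0 := by nlinarith [sq_nonneg (δ - 1)]
  set a : ℂ := ((1 - δ : ℝ) : ℂ)
  set b : ℂ := ((δ / 2 : ℝ) : ℂ)
  have hcube : (a • P + b • (1 : Matrix (Fin 2) (Fin 2) ℂ)) ^ 3
      = (a ^ 3 + 3 * a ^ 2 * b + 3 * a * b ^ 2) • P + (b ^ 3) • 1 := by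
    have h2 : (a • P + b • (1 : Matrix (Fin 2) (Fin 2) ℂ)) * (a • P + b • 1)
        = (a ^ 2 + 2 * a * b) • P + (b ^ 2) • 1 := by
      simp only [add_mul, mul_add, smul_mul_assoc, mul_smul_comm, hP, mul_one, one_mul,
        smul_smul]
      match_scalars <;> ring
    rw [pow_succ, pow_two, h2, add_mul, mul_add, mul_add]
    simp only [smul_mul_assoc, mul_smul_comm, hP, mul_one, one_mul, smul_smul]
    match_scalars <;> ring
  -- key cancellation in ℝ
  have hc : (2 * δ + δ ^ 3) / (6 * (1 - δ + δ ^ 2 / 2)) * (1 - δ + δ ^ 2 / 2)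
      = (2 * δ + δ ^ 3) / 6 := by
    rw [← div_div]; exact div_mul_cancel₀ _ hp
  have hc' := congrArg (fun x : ℝ => (x : ℂ)) hc
  push_cast at hc'
  have hmain : ((1 : ℂ) / 3) • (a • P + b • (1 : Matrix (Fin 2) (Fin 2) ℂ))
        + ((2 : ℂ) / 3) • (a • P + b • 1) ^ 3
      = ((1 - δ + δ ^ 2 / 2 : ℝ) : ℂ) •
          (((1 - (2 * δ + δ ^ 3) / (6 * (1 - δ + δ ^ 2 / 2)) : ℝ) : ℂ) • P
            + (((2 * δ + δ ^ 3) / (6 * (1 - δ + δ ^ 2 / 2)) / 2 : ℝ) : ℂ) • 1) := by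
    rw [hcube]
    match_scalars
    · simp only [a, b]
      push_cast
      linear_combination hc'
    · simp only [a, b]
      push_cast
      linear_combination -hc' / 2
  refine ⟨hmain, ?_⟩
  rw [hmain, trace_smul, trace_add, trace_smul, trace_smul, htrP, trace_one]
  simp only [smul_eq_mul, mul_one, Fintype.card_fin]
  push_cast
  ring
end

section
/- (Weak duality for the probability SDP.) Let a, b ≥ 1, f ∈ ℝ, and let Q, R be Hermitian matrices on ℂ^a ⊗ ℂ^b. Suppose J is a positive semidefinite matrix on ℂ^a ⊗ ℂ^b with tr₂[J] ≤ I_a and tr[J·Q] = f·tr[J·R], and suppose x ∈ ℝ and Y is a Hermitian a×a matrix with Y ≤ 0 and (1 − x·f)·R + x·Q + Y⊗I_b ≤ 0 (in the Loewner order). Then tr[J·R] ≤ −tr[Y]. -/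
/-!
Weak duality: with `D = (1 − x f) R + x Q + Y ⊗ I_b` the dual constraint, the constraint
`tr[J Q] = f tr[J R]` and `tr[J (Y ⊗ I_b)] = tr[tr₂[J] Y]` give
`−tr[Y] − tr[J R] = tr[J (−D)] + tr[(I_a − tr₂[J]) (−Y)]`,
and the trace of a product of two positive semidefinite matrices is nonnegative.
-/

open Matrix Kronecker ComplexOrder

/-- Partial trace over the second tensor factor `ℂ^b`. -/
noncomputable def ptrB {a b : ℕ} (M : Matrix (Fin a × Fin b) (Fin a × Fin b) ℂ) :
    Matrix (Fin a) (Fin a) ℂ :=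
  Matrix.of fun i j => ∑ k : Fin b, M (i, k) (j, k)

theorem Matrix.PosSemidef.trace_mul_nonneg {𝕜 n : Type*} [RCLike 𝕜] [Fintype n]
    {A B : Matrix n n 𝕜} (hA : A.PosSemidef) (hB : B.PosSemidef) : 0 ≤ (A * B).trace := by
  obtain ⟨C, rfl⟩ : ∃ C : Matrix n n 𝕜, A = star C * C := by
    classical
    open scoped MatrixOrder in exact CStarAlgebra.nonneg_iff_eq_star_mul_self.mp hA.nonneg
  rw [Matrix.mul_assoc, trace_mul_comm]
  exact (hB.mul_mul_conjTranspose_same C).trace_nonneg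

theorem trace_mul_kronecker_one_eq_trace_ptrB_mul {a b : ℕ}
    (J : Matrix (Fin a × Fin b) (Fin a × Fin b) ℂ) (Y : Matrix (Fin a) (Fin a) ℂ) :
    (J * (Y ⊗ₖ (1 : Matrix (Fin b) (Fin b) ℂ))).trace = (ptrB J * Y).trace := by
  simp only [trace, diag_apply, mul_apply, ptrB, of_apply, kroneckerMap_apply,
    Fintype.sum_prod_type, one_apply, mul_ite, mul_one, mul_zero, Finset.sum_ite_eq',
    Finset.mem_univ, if_true, Finset.sum_mul]
  exact Finset.sum_congr rfl fun i _ => Finset.sum_comm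

theorem stmt18_general (a b : ℕ) (f : ℝ)
    (Q R : Matrix (Fin a × Fin b) (Fin a × Fin b) ℂ)
    (J : Matrix (Fin a × Fin b) (Fin a × Fin b) ℂ) (hJ : J.PosSemidef)
    (hJtr : ((1 : Matrix (Fin a) (Fin a) ℂ) - ptrB J).PosSemidef)
    (hJQR : (J * Q).trace = (f : ℂ) * (J * R).trace)
    (x : ℝ) (Y : Matrix (Fin a) (Fin a) ℂ)
    (hYneg : (-Y).PosSemidef)
    (hdual : (-(((1 - x * f : ℝ) : ℂ) • R + (x : ℂ) • Q
      + Y ⊗ₖ (1 : Matrix (Fin b) (Fin b) ℂ))).PosSemidef) :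
    (J * R).trace ≤ -Y.trace := by
  have duality_gap : -Y.trace - (J * R).trace
      = (J * -(((1 - x * f : ℝ) : ℂ) • R + (x : ℂ) • Q
          + Y ⊗ₖ (1 : Matrix (Fin b) (Fin b) ℂ))).trace
        + ((1 - ptrB J) * -Y).trace := by
    simp only [Matrix.mul_neg, Matrix.mul_add, Matrix.mul_smul, Matrix.sub_mul, Matrix.one_mul,
      trace_neg, trace_add, trace_sub, trace_smul, smul_eq_mul,
      trace_mul_kronecker_one_eq_trace_ptrB_mul, hJQR]
    push_cast
    ring
  rw [← sub_nonneg, duality_gap]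
  exact add_nonneg (hJ.trace_mul_nonneg hdual) (hJtr.trace_mul_nonneg hYneg)

/-- weak duality for the probability SDP. If `J ⪰ 0` with
`tr₂[J] ≤ I_a` and `tr[J·Q] = f·tr[J·R]`, and `(x, Y)` is dual feasible, i.e.
`Y ≤ 0` Hermitian and `(1 − x·f)·R + x·Q + Y⊗I_b ≤ 0`, then `tr[J·R] ≤ −tr[Y]`. -/
theorem stmt18 (a b : ℕ) (ha : 1 ≤ a) (hb : 1 ≤ b) (f : ℝ)
    (Q R : Matrix (Fin a × Fin b) (Fin a × Fin b) ℂ)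
    (hQ : Q.IsHermitian) (hR : R.IsHermitian)
    (J : Matrix (Fin a × Fin b) (Fin a × Fin b) ℂ) (hJ : J.PosSemidef)
    (hJtr : ((1 : Matrix (Fin a) (Fin a) ℂ) - ptrB J).PosSemidef)
    (hJQR : (J * Q).trace = (f : ℂ) * (J * R).trace)
    (x : ℝ) (Y : Matrix (Fin a) (Fin a) ℂ) (hY : Y.IsHermitian)
    (hYneg : (-Y).PosSemidef)
    (hdual : (-(((1 - x * f : ℝ) : ℂ) • R + (x : ℂ) • Q
      + Y ⊗ₖ (1 : Matrix (Fin b) (Fin b) ℂ))).PosSemidef) :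
    (J * R).trace ≤ -Y.trace :=
  stmt18_general a b f Q R J hJ hJtr hJQR x Y hYneg hdual
end
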